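/- arXiv:1809.04972 — 4 statements merged into one kernel-verified Lean document; each statement's English description precedes it below -/
import Mathlib

section
/- Let $\{\rho[t]\}_{t\geq 0}$ be a real sequence with $|\rho[t]| < L$ and $|\rho[t+1] - \rho[t]| \leq M/t$ for all $t \geq 1$, and define $\theta[t] = \sum_{m=0}^{t-1}\alpha(1-\alpha)^m \rho[t-m]$ for a fixed $\alpha \in (0,1]$. Then $\lim_{t\to\infty}(\rho[t] - \theta[t]) = 0$. -/
/-!
Writing `c = 1 - α`, the EMA obeys `θ[t+1] = α ρ[t+1] + c θ[t]`, so the tracking error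
`e[t] = ρ[t] - θ[t]` satisfies `e[t+1] = c (e[t] + (ρ[t+1] - ρ[t]))`. Since `0 ≤ c < 1` and
the increments of `ρ` tend to zero, the error is a contraction driven by a vanishing input,
hence tends to zero.
-/

open Finset Filter Topology

namespace Stmt8

theorem tendsto_zero_of_norm_succ_le {E : Type*} [SeminormedAddCommGroup E] {e : ℕ → E}
    {δ : ℕ → ℝ} {r : ℝ} (hr₀ : 0 ≤ r) (hr₁ : r < 1) (hδ : Tendsto δ atTop (𝓝 0))
    (he : ∀ t, ‖e (t + 1)‖ ≤ r * ‖e t‖ + δ t) : Tendsto e atTop (𝓝 0) := by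
  rw [Metric.tendsto_atTop]
  intro ε hε
  obtain ⟨N, hN⟩ : ∃ N, ∀ t ≥ N, δ t ≤ (1 - r) * (ε / 2) :=
    eventually_atTop.1 (hδ.eventually (ge_mem_nhds (by nlinarith)))
  have hcontract : ∀ k, ‖e (N + k)‖ ≤ r ^ k * ‖e N‖ + ε / 2 := by
    intro k
    induction k with
    | zero => simp only [add_zero, pow_zero, one_mul]; linarith
    | succ k ih =>
      calc ‖e (N + (k + 1))‖ ≤ r * ‖e (N + k)‖ + δ (N + k) := he (N + k)
        _ ≤ r * (r ^ k * ‖e N‖ + ε / 2) + (1 - r) * (ε / 2) := by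
          gcongr
          exact hN _ (Nat.le_add_right N k)
        _ = r ^ (k + 1) * ‖e N‖ + ε / 2 := by ring
  obtain ⟨K, hK⟩ : ∃ K, ∀ k ≥ K, r ^ k * ‖e N‖ < ε / 2 := by
    refine eventually_atTop.1
      (((tendsto_pow_atTop_nhds_zero_of_lt_one hr₀ hr₁).mul_const ‖e N‖).eventually
        (gt_mem_nhds ?_))
    simpa using half_pos hε
  refine ⟨N + K, fun t ht => ?_⟩
  obtain ⟨k, rfl⟩ := Nat.exists_eq_add_of_le (le_trans (Nat.le_add_right N K) ht)
  rw [dist_zero_right]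
  linarith [hcontract k, hK k (by omega)]

def ema (α : ℝ) (ρ : ℕ → ℝ) (t : ℕ) : ℝ :=
  ∑ m ∈ range t, α * (1 - α) ^ m * ρ (t - m)

theorem ema_succ (α : ℝ) (ρ : ℕ → ℝ) (t : ℕ) :
    ema α ρ (t + 1) = α * ρ (t + 1) + (1 - α) * ema α ρ t := by
  rw [ema, sum_range_succ', ema, mul_sum, add_comm]
  congr 1
  · simp
  · refine sum_congr rfl fun m _ => ?_
    rw [Nat.add_sub_add_right]
    ring

theorem sub_ema_succ (α : ℝ) (ρ : ℕ → ℝ) (t : ℕ) :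
    ρ (t + 1) - ema α ρ (t + 1) = (1 - α) * ((ρ t - ema α ρ t) + (ρ (t + 1) - ρ t)) := by
  rw [ema_succ]
  ring

theorem ema_tracks_slowly_varying_general (ρ θ : ℕ → ℝ) (M α : ℝ)
    (hM : ∀ t : ℕ, 1 ≤ t → |ρ (t + 1) - ρ t| ≤ M / t)
    (hα : α ∈ Set.Ioc (0:ℝ) 1)
    (hθ : ∀ t, θ t = ∑ m ∈ Finset.range t, α * (1 - α) ^ m * ρ (t - m)) :
    Tendsto (fun t => ρ t - θ t) atTop (nhds 0) := by
  obtain rfl : θ = ema α ρ := funext hθ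
  have hc₀ : 0 ≤ 1 - α := by linarith [hα.2]
  have hΔ : Tendsto (fun t => ρ (t + 1) - ρ t) atTop (𝓝 0) :=
    squeeze_zero_norm' (eventually_atTop.2 ⟨1, hM⟩) (tendsto_const_div_atTop_nhds_zero_nat M)
  refine tendsto_zero_of_norm_succ_le hc₀ (by linarith [hα.1])
    (by simpa using hΔ.abs.const_mul (1 - α)) fun t => ?_
  calc ‖ρ (t + 1) - ema α ρ (t + 1)‖
      = (1 - α) * |(ρ t - ema α ρ t) + (ρ (t + 1) - ρ t)| := by
        rw [sub_ema_succ, Real.norm_eq_abs, abs_mul, abs_of_nonneg hc₀]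
    _ ≤ (1 - α) * ‖ρ t - ema α ρ t‖ + (1 - α) * |ρ (t + 1) - ρ t| := by
        rw [← mul_add]
        exact mul_le_mul_of_nonneg_left (abs_add_le _ _) hc₀

theorem ema_tracks_slowly_varying (ρ θ : ℕ → ℝ) (L M α : ℝ)
    (hLpos : 0 < L) (hMpos : 0 < M)
    (hL : ∀ t, |ρ t| < L)
    (hM : ∀ t : ℕ, 1 ≤ t → |ρ (t + 1) - ρ t| ≤ M / t)
    (hα : α ∈ Set.Ioc (0:ℝ) 1)
    (hθ : ∀ t, θ t = ∑ m ∈ Finset.range t, α * (1 - α) ^ m * ρ (t - m)) :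
    Tendsto (fun t => ρ t - θ t) atTop (nhds 0) :=
  ema_tracks_slowly_varying_general ρ θ M α hM hα hθ

end Stmt8
end

section
/- The penalty function $V_i(\theta_i, \theta_{-i}) = \int_{-\infty}^{\theta_i} x\, \partial_x s_i(x, \theta_{-i})\, dx$, where $s_i(\theta) = \mathbb{E}_{p_\theta}[\sigma_i]$ for the Ising distribution $p_\theta$, admits the closed form $V_i(\theta) = \theta_i s_i(\theta) + \ln(1 - s_i(\theta))$. -/
/-!
As a function of `x = θ_i`, every Boltzmann weight is `exp (x σ_i)` times its value at `θ_i = 0`.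
Splitting the configurations according to `σ_i` therefore shows that `s_i(x, θ_{-i})` is the shifted
logistic function `sigmoid (x + log (Z₁ / Z₀))`, where `Z_b` sums the weights at `θ_i = 0` over the
configurations with `σ_i = b`. Because `s' = s (1 - s)`, the derivative of `log (1 - s)` is `-s`, so
`x s(x) + log (1 - s(x))` is an antiderivative of `x s'(x)`. It tends to `0` at `-∞`, and
`x s'(x) = O(e^{x/2})` there, so the improper integral is its value at `θ_i`.
-/

open Finset MeasureTheory

namespace Stmt12

variable {V : Type*} [Fintype V] [DecidableEq V]

noncomputable def ind (b : Bool) : ℝ := if b then 1 else 0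

noncomputable def weight (E : Finset (V × V)) (θv : V → ℝ) (θe : V × V → ℝ)
    (σ : V → Bool) : ℝ :=
  ∑ i, θv i * ind (σ i) + ∑ e ∈ E, θe e * ind (σ e.1) * ind (σ e.2)

noncomputable def Z (E : Finset (V × V)) (θv : V → ℝ) (θe : V × V → ℝ) : ℝ :=
  ∑ σ : V → Bool, Real.exp (weight E θv θe σ)

noncomputable def p (E : Finset (V × V)) (θv : V → ℝ) (θe : V × V → ℝ)
    (σ : V → Bool) : ℝ :=
  Real.exp (weight E θv θe σ) / Z E θv θe

/-- node marginal `s_i(θ)` -/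
noncomputable def sN (E : Finset (V × V)) (θv : V → ℝ) (θe : V × V → ℝ) (i : V) : ℝ :=
  ∑ σ : V → Bool, p E θv θe σ * ind (σ i)

/-- `s_i` as a function of its own parameter `θ_i` -/
noncomputable def sfun (E : Finset (V × V)) (θv : V → ℝ) (θe : V × V → ℝ) (i : V)
    (x : ℝ) : ℝ :=
  sN E (Function.update θv i x) θe i

/-- penalty `V_i(y, θ_{-i}) = ∫_{-∞}^{y} x ∂_x s_i(x, θ_{-i}) dx` -/
noncomputable def pen (E : Finset (V × V)) (θv : V → ℝ) (θe : V × V → ℝ) (i : V)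
    (y : ℝ) : ℝ :=
  ∫ x in Set.Iio y, x * deriv (sfun E θv θe i) x

open Real Filter Topology

section Logistic

variable (c : ℝ)

lemma sigmoid_le_exp (t : ℝ) : sigmoid t ≤ exp t := by
  rw [sigmoid_def, inv_le_iff_one_le_mul₀ (by positivity), mul_add, ← exp_add,
    add_neg_cancel, exp_zero]
  linarith [exp_pos t]

lemma abs_mul_sigmoid_add_le {x : ℝ} (hx : x ≤ 0) :
    |x| * sigmoid (x + c) ≤ 2 * exp c * exp (2⁻¹ * x) := by
  have habs : |x| ≤ 2 * exp (-(2⁻¹ * x)) := by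
    rw [abs_of_nonpos hx]
    linarith [add_one_le_exp (-(2⁻¹ * x))]
  calc |x| * sigmoid (x + c)
      ≤ 2 * exp (-(2⁻¹ * x)) * exp (x + c) :=
        mul_le_mul habs (sigmoid_le_exp _) (sigmoid_nonneg _) (by positivity)
    _ = 2 * exp c * exp (2⁻¹ * x) := by
        rw [mul_assoc, ← exp_add, mul_assoc, ← exp_add]
        ring_nf

lemma hasDerivAt_sigmoid_add (x : ℝ) :
    HasDerivAt (fun x => sigmoid (x + c)) (sigmoid (x + c) * (1 - sigmoid (x + c))) x :=
  (hasDerivAt_sigmoid (x + c)).comp_add_const x c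

lemma hasDerivAt_mul_sigmoid_add_add_log (x : ℝ) :
    HasDerivAt (fun x => x * sigmoid (x + c) + log (1 - sigmoid (x + c)))
      (x * (sigmoid (x + c) * (1 - sigmoid (x + c)))) x := by
  have hs := hasDerivAt_sigmoid_add c x
  have hne : 1 - sigmoid (x + c) ≠ 0 := (sub_pos.2 (sigmoid_lt_one _)).ne'
  refine (((hasDerivAt_id' x).mul hs).add ((hs.const_sub 1).log hne)).congr_deriv ?_
  field_simp
  ring

lemma tendsto_mul_sigmoid_add_add_log_atBot :
    Tendsto (fun x => x * sigmoid (x + c) + log (1 - sigmoid (x + c))) atBot (𝓝 0) := by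
  have hs : Tendsto (fun x => sigmoid (x + c)) atBot (𝓝 0) :=
    tendsto_sigmoid_atBot.comp (tendsto_atBot_add_const_right _ c tendsto_id)
  have hmul : Tendsto (fun x => x * sigmoid (x + c)) atBot (𝓝 0) := by
    have hbound : Tendsto (fun x : ℝ => 2 * exp c * exp (2⁻¹ * x)) atBot (𝓝 0) := by
      simpa using (tendsto_exp_atBot.comp
        (tendsto_id.const_mul_atBot (by norm_num : (0 : ℝ) < 2⁻¹))).const_mul (2 * exp c)
    refine squeeze_zero_norm' ?_ hbound
    filter_upwards [eventually_le_atBot 0] with x hx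
    rw [norm_mul, Real.norm_eq_abs, Real.norm_of_nonneg (sigmoid_nonneg _)]
    exact abs_mul_sigmoid_add_le c hx
  have hlog : Tendsto (fun x => log (1 - sigmoid (x + c))) atBot (𝓝 0) := by
    have h1 : Tendsto (fun x => 1 - sigmoid (x + c)) atBot (𝓝 1) := by
      simpa using hs.const_sub 1
    simpa using h1.log one_ne_zero
  simpa using hmul.add hlog

lemma integrableOn_Iic_mul_sigmoid_add_mul_one_sub (y : ℝ) :
    IntegrableOn (fun x => x * (sigmoid (x + c) * (1 - sigmoid (x + c)))) (Set.Iic y) := by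
  have hcont : Continuous (fun x => x * (sigmoid (x + c) * (1 - sigmoid (x + c)))) := by
    fun_prop
  refine (hcont.continuousOn.locallyIntegrableOn measurableSet_Iic).integrableOn_of_isBigO_atBot
    (g := fun x => exp (2⁻¹ * x)) ?_ ⟨Set.Iic 0, Iic_mem_atBot 0,
      integrableOn_exp_mul_Iic (by norm_num) 0⟩
  refine Asymptotics.IsBigO.of_bound (2 * exp c) ?_
  filter_upwards [eventually_le_atBot 0] with x hx
  have h1 : 0 ≤ 1 - sigmoid (x + c) := sub_nonneg.2 (sigmoid_le_one _)
  have h2 : 1 - sigmoid (x + c) ≤ 1 := by linarith [sigmoid_nonneg (x + c)]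
  rw [norm_mul, norm_mul, Real.norm_eq_abs, Real.norm_of_nonneg (sigmoid_nonneg _),
    Real.norm_of_nonneg h1, Real.norm_of_nonneg (exp_pos _).le]
  calc |x| * (sigmoid (x + c) * (1 - sigmoid (x + c)))
      ≤ |x| * sigmoid (x + c) :=
        mul_le_mul_of_nonneg_left (mul_le_of_le_one_right (sigmoid_nonneg _) h2) (abs_nonneg x)
    _ ≤ 2 * exp c * exp (2⁻¹ * x) := abs_mul_sigmoid_add_le c hx

theorem integral_Iio_mul_deriv_sigmoid_add (y : ℝ) :
    ∫ x in Set.Iio y, x * deriv (fun x => sigmoid (x + c)) x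
      = y * sigmoid (y + c) + log (1 - sigmoid (y + c)) := by
  have hderiv : deriv (fun x => sigmoid (x + c))
      = fun x => sigmoid (x + c) * (1 - sigmoid (x + c)) :=
    funext fun x => (hasDerivAt_sigmoid_add c x).deriv
  rw [hderiv, ← integral_Iic_eq_integral_Iio,
    integral_Iic_of_hasDerivAt_of_tendsto' (fun x _ => hasDerivAt_mul_sigmoid_add_add_log c x)
      (integrableOn_Iic_mul_sigmoid_add_mul_one_sub c y)
      (tendsto_mul_sigmoid_add_add_log_atBot c), sub_zero]

end Logistic

lemma mul_exp_div_mul_exp_add_eq_sigmoid {A B : ℝ} (hA : 0 < A) (hB : 0 < B) (x : ℝ) :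
    exp x * A / (exp x * A + B) = sigmoid (x + log (A / B)) := by
  rw [sigmoid_def, neg_add, exp_add, exp_neg, exp_neg, exp_log (div_pos hA hB)]
  field_simp

section Ising

noncomputable def fiberZ (E : Finset (V × V)) (θv : V → ℝ) (θe : V × V → ℝ) (i : V)
    (b : Bool) : ℝ :=
  ∑ σ ∈ univ.filter (fun σ : V → Bool => σ i = b),
    exp (weight E (Function.update θv i 0) θe σ)

variable (E : Finset (V × V)) (θv : V → ℝ) (θe : V × V → ℝ) (i : V)

lemma fiberZ_pos (b : Bool) : 0 < fiberZ E θv θe i b :=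
  sum_pos (fun _ _ => exp_pos _) ⟨fun _ => b, by simp⟩

lemma weight_update (x : ℝ) (σ : V → Bool) :
    weight E (Function.update θv i x) θe σ
      = x * ind (σ i) + weight E (Function.update θv i 0) θe σ := by
  have hsplit : ∀ t : ℝ, ∑ j, Function.update θv i t j * ind (σ j)
      = t * ind (σ i) + ∑ j ∈ univ.erase i, θv j * ind (σ j) := fun t => by
    rw [← add_sum_erase _ _ (mem_univ i), Function.update_self]
    congr 1
    exact sum_congr rfl fun j hj => by rw [Function.update_of_ne (ne_of_mem_erase hj)]
  rw [weight, weight, hsplit x, hsplit 0]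
  ring

lemma sum_exp_weight_update_mul (x : ℝ) (h : Bool → ℝ) :
    ∑ σ : V → Bool, exp (weight E (Function.update θv i x) θe σ) * h (σ i)
      = ∑ b, exp (x * ind b) * h b * fiberZ E θv θe i b := by
  rw [← sum_fiberwise univ (fun σ : V → Bool => σ i)]
  refine sum_congr rfl fun b _ => ?_
  rw [fiberZ, mul_sum]
  refine sum_congr rfl fun σ hσ => ?_
  rw [weight_update, exp_add, (mem_filter.1 hσ).2]
  ring

lemma sfun_eq_sigmoid (x : ℝ) :
    sfun E θv θe i x
      = sigmoid (x + log (fiberZ E θv θe i true / fiberZ E θv θe i false)) := by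
  have hZ : Z E (Function.update θv i x) θe
      = exp x * fiberZ E θv θe i true + fiberZ E θv θe i false := by
    simpa [Z, ind] using sum_exp_weight_update_mul E θv θe i x (fun _ => 1)
  have hnum : ∑ σ : V → Bool, exp (weight E (Function.update θv i x) θe σ) * ind (σ i)
      = exp x * fiberZ E θv θe i true := by
    simpa [ind] using sum_exp_weight_update_mul E θv θe i x ind
  rw [← mul_exp_div_mul_exp_add_eq_sigmoid (fiberZ_pos E θv θe i true)
    (fiberZ_pos E θv θe i false), sfun, sN, ← hZ, ← hnum, sum_div]
  simp only [p, div_mul_eq_mul_div]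

end Ising

/-- the penalty admits the closed form
`V_i(θ) = θ_i s_i(θ) + ln(1 - s_i(θ))`. -/
theorem penalty_closed_form
    (E : Finset (V × V)) (θv : V → ℝ) (θe : V × V → ℝ) (i : V) :
    pen E θv θe i (θv i) =
      θv i * sN E θv θe i + Real.log (1 - sN E θv θe i) := by
  have hsfun : sfun E θv θe i
      = fun x => sigmoid (x + log (fiberZ E θv θe i true / fiberZ E θv θe i false)) :=
    funext (sfun_eq_sigmoid E θv θe i)
  have hsN : sN E θv θe i = sfun E θv θe i (θv i) := by
    rw [sfun, Function.update_eq_self]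
  rw [pen, hsN, hsfun, integral_Iio_mul_deriv_sigmoid_add]

end Stmt12
end

section
/- The game CoordGain(β) is an ordinal potential game with potential $P(\theta) = -\sup_{\mu,\lambda} L(\mu,\lambda;\theta/\beta)$, where $L$ is the Lagrangian of the entropy-regularized problem A-CG-OPT: on the region where all marginals $s_n(\theta) \in (0,1)$, for every node player $i$, $\mathrm{sgn}\,\partial\Psi_i(\theta)/\partial\theta_i = \mathrm{sgn}\,\partial P(\theta)/\partial\theta_i$, and for every edge player $(i,j)$, $\mathrm{sgn}\,\partial\Psi_{ij}(\theta)/\partial\theta_{ij} = \mathrm{sgn}\,\partial P(\theta)/\partial\theta_{ij}$. -/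
/-!
Maximising the Lagrangian separates. The entropy part gives `(1/β) log Z(θ)` by the Gibbs
variational principle, and each multiplier `λ_n` gives the one-dimensional problem
`max_{y ∈ [0,1]} (f_n y - θ_n y / β)` with `f_n = U_ij` or `f_n = -C_i`. Moving a single parameter
`θ_n` shifts the weight of a configuration by `θ_n` times a 0/1 statistic, so along that line
`Z = a e^θ_n + b` and `s_n` is the logistic function `a e^θ_n / (a e^θ_n + b)`. By the envelope
theorem `∂P/∂θ_n = (y*_n - s_n)/β`, where `y*_n` is the maximiser, while
`∂Ψ_n/∂θ_n = s_n (1 - s_n) (f_n'(s_n) - θ_n/β)`; by strict concavity of `f_n - θ_n y/β`, the last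
factor has the sign of `y*_n - s_n`.
-/

open Finset

namespace Stmt13

variable {V : Type*} [Fintype V] [DecidableEq V]

noncomputable def ind (b : Bool) : ℝ := if b then 1 else 0

noncomputable def weight (E : Finset (V × V)) (θv : V → ℝ) (θe : V × V → ℝ)
    (σ : V → Bool) : ℝ :=
  ∑ i, θv i * ind (σ i) + ∑ e ∈ E, θe e * ind (σ e.1) * ind (σ e.2)

noncomputable def Z (E : Finset (V × V)) (θv : V → ℝ) (θe : V × V → ℝ) : ℝ :=
  ∑ σ : V → Bool, Real.exp (weight E θv θe σ)

noncomputable def p (E : Finset (V × V)) (θv : V → ℝ) (θe : V × V → ℝ)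
    (σ : V → Bool) : ℝ :=
  Real.exp (weight E θv θe σ) / Z E θv θe

noncomputable def sN (E : Finset (V × V)) (θv : V → ℝ) (θe : V × V → ℝ) (i : V) : ℝ :=
  ∑ σ : V → Bool, p E θv θe σ * ind (σ i)

noncomputable def sE (E : Finset (V × V)) (θv : V → ℝ) (θe : V × V → ℝ) (e : V × V) : ℝ :=
  ∑ σ : V → Bool, p E θv θe σ * (ind (σ e.1) * ind (σ e.2))

def IsDist (μ : (V → Bool) → ℝ) : Prop :=
  (∀ σ, 0 ≤ μ σ) ∧ ∑ σ : V → Bool, μ σ = 1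

noncomputable def H (μ : (V → Bool) → ℝ) : ℝ :=
  -∑ σ : V → Bool, μ σ * Real.log (μ σ)

noncomputable def meanN (μ : (V → Bool) → ℝ) (i : V) : ℝ :=
  ∑ σ : V → Bool, μ σ * ind (σ i)

noncomputable def meanE (μ : (V → Bool) → ℝ) (e : V × V) : ℝ :=
  ∑ σ : V → Bool, μ σ * (ind (σ e.1) * ind (σ e.2))

/-- node payoff `Ψ_i(θ) = -C_i(s_i(θ)) - (1/β) V_i(θ)` with penalty
`V_i(θ) = θ_i s_i(θ) + ln(1 - s_i(θ))` (the closed form of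
`∫_{-∞}^{θ_i} x ∂_x s_i(x,θ_{-i}) dx`). -/
noncomputable def ΨN (E : Finset (V × V)) (C : V → ℝ → ℝ) (β : ℝ)
    (θv : V → ℝ) (θe : V × V → ℝ) (i : V) : ℝ :=
  -C i (sN E θv θe i) -
    (1 / β) * (θv i * sN E θv θe i + Real.log (1 - sN E θv θe i))

/-- edge payoff `Ψ_{ij}(θ) = U_{ij}(s_{ij}(θ)) - (1/β) V_{ij}(θ)` -/
noncomputable def ΨE (E : Finset (V × V)) (U : V × V → ℝ → ℝ) (β : ℝ)
    (θv : V → ℝ) (θe : V × V → ℝ) (e : V × V) : ℝ :=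
  U e (sE E θv θe e) -
    (1 / β) * (θe e * sE E θv θe e + Real.log (1 - sE E θv θe e))

/-- Lagrangian of A-CG-OPT with multipliers `k = θ/β` -/
noncomputable def Lag (E : Finset (V × V)) (U : V × V → ℝ → ℝ) (C : V → ℝ → ℝ)
    (β : ℝ) (θv : V → ℝ) (θe : V × V → ℝ)
    (μ : (V → Bool) → ℝ) (lv : V → ℝ) (le : V × V → ℝ) : ℝ :=
  ∑ e ∈ E, U e (le e) - ∑ i, C i (lv i) + (1 / β) * H μ +
    ∑ i, (θv i / β) * (meanN μ i - lv i) +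
    ∑ e ∈ E, (θe e / β) * (meanE μ e - le e)

/-- potential `P(θ) = -sup_{μ,λ} L(μ,λ;θ/β)` -/
noncomputable def P (E : Finset (V × V)) (U : V × V → ℝ → ℝ) (C : V → ℝ → ℝ)
    (β : ℝ) (θv : V → ℝ) (θe : V × V → ℝ) : ℝ :=
  -sSup {y : ℝ | ∃ μ lv le, IsDist μ ∧ (∀ i, lv i ∈ Set.Icc (0:ℝ) 1) ∧
    (∀ e, le e ∈ Set.Icc (0:ℝ) 1) ∧ y = Lag E U C β θv θe μ lv le}

open Set Filter Topology

lemma sign_mul_of_pos {a : ℝ} (ha : 0 < a) (b : ℝ) : Real.sign (a * b) = Real.sign b := by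
  rcases lt_trichotomy b 0 with hb | rfl | hb
  · rw [Real.sign_of_neg hb, Real.sign_of_neg (mul_neg_of_pos_of_neg ha hb)]
  · rw [mul_zero]
  · rw [Real.sign_of_pos hb, Real.sign_of_pos (mul_pos ha hb)]

lemma sign_eq_sign_of_mul_pos {a b : ℝ} (h : 0 < a * b) : Real.sign a = Real.sign b := by
  rcases pos_and_pos_or_neg_and_neg_of_mul_pos h with ⟨ha, hb⟩ | ⟨ha, hb⟩
  · rw [Real.sign_of_pos ha, Real.sign_of_pos hb]
  · rw [Real.sign_of_neg ha, Real.sign_of_neg hb]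

lemma _root_.StrictConcaveOn.lt_add_mul_sub_of_hasDerivAt {S : Set ℝ} {F : ℝ → ℝ} {d x y : ℝ}
    (hF : StrictConcaveOn ℝ S F) (hx : x ∈ S) (hy : y ∈ S) (hyx : y ≠ x)
    (hd : HasDerivAt F d x) : F y < F x + d * (y - x) := by
  rcases hyx.lt_or_gt with h | h
  · have := hF.lt_slope_of_hasDerivAt hy hx h hd
    rw [slope_def_field, lt_div_iff₀ (sub_pos.2 h)] at this
    linarith
  · have := hF.slope_lt_of_hasDerivAt hx hy h hd
    rw [slope_def_field, div_lt_iff₀ (sub_pos.2 h)] at this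
    linarith

lemma _root_.StrictConcaveOn.sign_deriv_eq_sign_sub_of_isMaxOn {S : Set ℝ} {F : ℝ → ℝ}
    {d s x : ℝ} (hF : StrictConcaveOn ℝ S F) (hd : HasDerivAt F d s) (hS : S ∈ 𝓝 s) (hx : x ∈ S)
    (hmax : IsMaxOn F S x) : Real.sign d = Real.sign (x - s) := by
  by_cases hxs : x = s
  · subst hxs
    rw [(hmax.isLocalMax hS).hasDerivAt_eq_zero hd, sub_self]
  · have htangent := hF.lt_add_mul_sub_of_hasDerivAt (mem_of_mem_nhds hS) hx hxs hd
    have hle : F s ≤ F x := hmax (mem_of_mem_nhds hS)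
    exact sign_eq_sign_of_mul_pos (by linarith)

lemma _root_.StrictConcaveOn.lt_of_isMaxOn {S : Set ℝ} {F : ℝ → ℝ} {x y : ℝ}
    (hF : StrictConcaveOn ℝ S F) (hmax : IsMaxOn F S x) (hx : x ∈ S) (hy : y ∈ S) (hyx : y ≠ x) :
    F y < F x :=
  (hmax hy).lt_of_ne fun h => hyx <| hF.eq_of_isMaxOn (fun _ hz => h ▸ hmax hz) hmax hy hx

lemma _root_.StrictConcaveOn.sub_mul {S : Set ℝ} {f : ℝ → ℝ} (hf : StrictConcaveOn ℝ S f)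
    (t : ℝ) :
    StrictConcaveOn ℝ S (fun y => f y - t * y) :=
  hf.sub_convexOn ((LinearMap.mul ℝ ℝ t).convexOn hf.1)

lemma _root_.IsCompact.exists_pos_forall_dist_lt_of_isMaxOn {X : Type*} [PseudoMetricSpace X]
    {K : Set X} {F : X → ℝ} {x : X} (hK : IsCompact K) (hF : ContinuousOn F K)
    (hunique : ∀ y ∈ K, y ≠ x → F y < F x) {ε : ℝ} (hε : 0 < ε) :
    ∃ δ > 0, ∀ y ∈ K, F x - δ < F y → dist y x < ε := by
  set far := K ∩ {y | ε ≤ dist y x}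
  rcases far.eq_empty_or_nonempty with hempty | hne
  · refine ⟨1, one_pos, fun y hy _ => ?_⟩
    by_contra! hd
    exact hempty.subset ⟨hy, hd⟩
  · obtain ⟨z, ⟨hzK, hzfar⟩, hzmax⟩ :=
      (hK.inter_right (isClosed_le continuous_const (continuous_id.dist continuous_const)))
        |>.exists_isMaxOn hne (hF.mono inter_subset_left)
    have hzx : z ≠ x := by
      rintro rfl
      have : ε ≤ dist z z := hzfar
      rw [dist_self] at this
      linarith
    refine ⟨F x - F z, sub_pos.2 (hunique z hzK hzx), fun y hy hFy => ?_⟩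
    by_contra! hd
    have : F y ≤ F z := hzmax ⟨hy, hd⟩
    linarith

noncomputable def tiltedMax (f : ℝ → ℝ) (t : ℝ) : ℝ :=
  sSup ((fun y => f y - t * y) '' Icc 0 1)

lemma exists_isMaxOn_tilted {f : ℝ → ℝ} (hf : ContinuousOn f (Icc 0 1)) (t : ℝ) :
    ∃ y ∈ Icc (0:ℝ) 1, IsMaxOn (fun y => f y - t * y) (Icc 0 1) y :=
  isCompact_Icc.exists_isMaxOn (nonempty_Icc.2 zero_le_one)
    (hf.sub (continuousOn_const.mul continuousOn_id))

lemma tiltedMax_eq_of_isMaxOn {f : ℝ → ℝ} {t y : ℝ} (hy : y ∈ Icc (0:ℝ) 1)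
    (hmax : IsMaxOn (fun y => f y - t * y) (Icc 0 1) y) : tiltedMax f t = f y - t * y :=
  IsGreatest.csSup_eq ⟨mem_image_of_mem _ hy, forall_mem_image.2 fun _ hz => hmax hz⟩

lemma le_tiltedMax {f : ℝ → ℝ} (hf : ContinuousOn f (Icc 0 1)) (t : ℝ) {y : ℝ}
    (hy : y ∈ Icc (0:ℝ) 1) : f y - t * y ≤ tiltedMax f t := by
  obtain ⟨z, hz, hmax⟩ := exists_isMaxOn_tilted hf t
  rw [tiltedMax_eq_of_isMaxOn hz hmax]
  exact hmax hy

lemma continuous_of_isMaxOn_tilted {f : ℝ → ℝ} (hf : ContinuousOn f (Icc 0 1))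
    (hconc : StrictConcaveOn ℝ (Icc 0 1) f) {m : ℝ → ℝ} (hm : ∀ t, m t ∈ Icc (0:ℝ) 1)
    (hmax : ∀ t, IsMaxOn (fun y => f y - t * y) (Icc 0 1) (m t)) : Continuous m := by
  refine Metric.continuous_iff.2 fun t₀ ε hε => ?_
  obtain ⟨δ, hδ, hclose⟩ := isCompact_Icc.exists_pos_forall_dist_lt_of_isMaxOn
    (F := fun y => f y - t₀ * y) (hf.sub (continuousOn_const.mul continuousOn_id))
    (fun y hy hne => (hconc.sub_mul t₀).lt_of_isMaxOn (hmax t₀) (hm t₀) hy hne) hε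
  refine ⟨δ, hδ, fun t ht => hclose (m t) (hm t) ?_⟩
  -- the objectives at `t` and `t₀` differ by `(t - t₀) y`, so `m t` is nearly optimal at `t₀`
  have hopt : f (m t₀) - t * m t₀ ≤ f (m t) - t * m t := hmax t (hm t₀)
  have hm1 : |m t - m t₀| ≤ 1 := abs_sub_le_iff.2
    ⟨by linarith [(hm t).2, (hm t₀).1], by linarith [(hm t).1, (hm t₀).2]⟩
  have hsmall : |(t - t₀) * (m t - m t₀)| < δ := by
    rw [abs_mul]
    calc |t - t₀| * |m t - m t₀| ≤ |t - t₀| * 1 := by gcongr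
      _ < δ := by rw [mul_one, ← Real.dist_eq]; exact ht
  have := neg_abs_le ((t - t₀) * (m t - m t₀))
  linarith

lemma hasDerivAt_tiltedMax {f : ℝ → ℝ} (hf : ContinuousOn f (Icc 0 1))
    (hconc : StrictConcaveOn ℝ (Icc 0 1) f) {t₀ x₀ : ℝ} (hx₀ : x₀ ∈ Icc (0:ℝ) 1)
    (hmax₀ : IsMaxOn (fun y => f y - t₀ * y) (Icc 0 1) x₀) :
    HasDerivAt (tiltedMax f) (-x₀) t₀ := by
  choose m hm hmax using exists_isMaxOn_tilted hf
  have hm₀ : m t₀ = x₀ := (hconc.sub_mul t₀).eq_of_isMaxOn (hmax t₀) hmax₀ (hm t₀) hx₀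
  -- comparing each maximiser with the other objective sandwiches the difference quotient
  have hbound : ∀ t, ‖tiltedMax f t - tiltedMax f t₀ - (t - t₀) • -x₀‖
      ≤ 1 * ‖(t - t₀) * (x₀ - m t)‖ := by
    intro t
    have h₁ : f x₀ - t * x₀ ≤ f (m t) - t * m t := hmax t hx₀
    have h₂ : f (m t) - t₀ * m t ≤ f x₀ - t₀ * x₀ := hmax₀ (hm t)
    rw [tiltedMax_eq_of_isMaxOn (hm t) (hmax t), tiltedMax_eq_of_isMaxOn hx₀ hmax₀, one_mul,
      Real.norm_eq_abs, Real.norm_eq_abs, smul_eq_mul]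
    exact abs_le_abs (by linarith) (by linarith)
  have hlittle : (fun t => (t - t₀) * (x₀ - m t)) =o[𝓝 t₀] fun t => t - t₀ := by
    have hlim : Tendsto (fun t => x₀ - m t) (𝓝 t₀) (𝓝 0) := by
      have := ((continuous_of_isMaxOn_tilted hf hconc hm hmax).tendsto t₀).const_sub x₀
      rwa [hm₀, sub_self] at this
    simpa using (Asymptotics.isBigO_refl (fun t => t - t₀) (𝓝 t₀)).mul_isLittleO
      ((Asymptotics.isLittleO_one_iff ℝ).2 hlim)
  exact hasDerivAt_iff_isLittleO.2 ((Asymptotics.IsBigO.of_bound 1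
    (Eventually.of_forall hbound)).trans_isLittleO hlittle)

noncomputable def logistic (a b x : ℝ) : ℝ := a * Real.exp x / (a * Real.exp x + b)

section Logistic

variable {a b : ℝ}

lemma logistic_mem_Ioo (ha : 0 < a) (hb : 0 < b) (x : ℝ) : logistic a b x ∈ Ioo (0:ℝ) 1 := by
  have hax : 0 < a * Real.exp x := mul_pos ha (Real.exp_pos x)
  exact ⟨by unfold logistic; positivity, (div_lt_one (by linarith)).2 (by linarith)⟩

lemma hasDerivAt_log_mul_exp_add (ha : 0 < a) (hb : 0 < b) (x : ℝ) :
    HasDerivAt (fun y => Real.log (a * Real.exp y + b)) (logistic a b x) x := by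
  have hax : 0 < a * Real.exp x := mul_pos ha (Real.exp_pos x)
  exact (((Real.hasDerivAt_exp x).const_mul a).add_const b).log (by linarith)

lemma hasDerivAt_logistic (ha : 0 < a) (hb : 0 < b) (x : ℝ) :
    HasDerivAt (logistic a b) (logistic a b x * (1 - logistic a b x)) x := by
  have hax : 0 < a * Real.exp x := mul_pos ha (Real.exp_pos x)
  have hexp := (Real.hasDerivAt_exp x).const_mul a
  refine (hexp.div (hexp.add_const b) (by linarith)).congr_deriv ?_
  unfold logistic
  field_simp

end Logistic

lemma hasDerivAt_penalty {s : ℝ → ℝ} {x : ℝ} (hs : HasDerivAt s (s x * (1 - s x)) x)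
    (hs1 : s x ≠ 1) :
    HasDerivAt (fun y => y * s y + Real.log (1 - s y)) (x * (s x * (1 - s x))) x := by
  have hlog := (hs.const_sub 1).log (sub_ne_zero.2 hs1.symm)
  refine ((hasDerivAt_id' x).mul hs |>.add hlog).congr_deriv ?_
  field_simp [sub_ne_zero.2 hs1.symm]
  ring

lemma sign_deriv_payoff_eq_sign_deriv_potential {a b β : ℝ} (ha : 0 < a) (hb : 0 < b)
    (hβ : 0 < β) {f f' : ℝ → ℝ} (hf' : ∀ y, HasDerivAt f (f' y) y)
    (hconc : StrictConcaveOn ℝ (Icc 0 1) f) (K t : ℝ) :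
    Real.sign (deriv (fun x => f (logistic a b x)
        - 1 / β * (x * logistic a b x + Real.log (1 - logistic a b x))) t)
      = Real.sign (deriv (fun x =>
          -(1 / β * Real.log (a * Real.exp x + b) + tiltedMax f (x / β) + K)) t) := by
  set s := logistic a b t
  have hs : s ∈ Ioo (0:ℝ) 1 := logistic_mem_Ioo ha hb t
  have hfc : ContinuousOn f (Icc 0 1) := fun y _ => (hf' y).continuousAt.continuousWithinAt
  obtain ⟨x₀, hx₀, hmax₀⟩ := exists_isMaxOn_tilted hfc (t / β)
  have hpayoff : HasDerivAt (fun x => f (logistic a b x)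
      - 1 / β * (x * logistic a b x + Real.log (1 - logistic a b x)))
      (s * (1 - s) * (f' s - t / β)) t := by
    have := ((hf' s).comp t (hasDerivAt_logistic ha hb t)).sub
      ((hasDerivAt_penalty (hasDerivAt_logistic ha hb t) hs.2.ne).const_mul (1 / β))
    exact this.congr_deriv (by ring)
  have hpotential : HasDerivAt (fun x =>
      -(1 / β * Real.log (a * Real.exp x + b) + tiltedMax f (x / β) + K))
      (1 / β * (x₀ - s)) t := by
    have hdiv : HasDerivAt (fun x => x / β) (1 / β) t := by
      simpa using (hasDerivAt_id t).div_const β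
    have := ((((hasDerivAt_log_mul_exp_add ha hb t).const_mul (1 / β)).add
      ((hasDerivAt_tiltedMax hfc hconc hx₀ hmax₀).comp t hdiv)).add_const K).neg
    exact this.congr_deriv (by ring)
  rw [hpayoff.deriv, hpotential.deriv, sign_mul_of_pos (mul_pos hs.1 (sub_pos.2 hs.2)),
    sign_mul_of_pos (one_div_pos.2 hβ)]
  exact (hconc.sub_mul (t / β)).sign_deriv_eq_sign_sub_of_isMaxOn
    (((hf' s).sub ((hasDerivAt_id' s).const_mul (t / β))).congr_deriv (by ring))
    (Icc_mem_nhds hs.1 hs.2) hx₀ hmax₀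

lemma mul_log_le_mul_log_add_sub {m q : ℝ} (hm : 0 ≤ m) (hq : 0 < q) :
    m * Real.log q ≤ m * Real.log m + q - m := by
  rcases hm.eq_or_lt with rfl | hm
  · simp [hq.le]
  · have := mul_le_mul_of_nonneg_left (Real.log_le_sub_one_of_pos (div_pos hq hm)) hm.le
    rw [Real.log_div hq.ne' hm.ne', mul_sub, mul_sub, mul_div_cancel₀ _ hm.ne'] at this
    linarith

lemma sum_mul_log_le_sum_mul_log {ι : Type*} [Fintype ι] {μ q : ι → ℝ} (hμ : ∀ i, 0 ≤ μ i)
    (hq : ∀ i, 0 < q i) (hsum : ∑ i, q i = ∑ i, μ i) :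
    ∑ i, μ i * Real.log (q i) ≤ ∑ i, μ i * Real.log (μ i) := by
  have := Finset.sum_le_sum fun i (_ : i ∈ Finset.univ) => mul_log_le_mul_log_add_sub (hμ i) (hq i)
  rw [Finset.sum_sub_distrib, Finset.sum_add_distrib, hsum] at this
  linarith

lemma ind_eq_zero_or_one (b : Bool) : ind b = 0 ∨ ind b = 1 := by
  cases b <;> simp [ind]

lemma ind_mul_ind_eq_zero_or_one (b c : Bool) : ind b * ind c = 0 ∨ ind b * ind c = 1 := by
  cases b <;> cases c <;> simp [ind]

section Gibbs

variable (E : Finset (V × V)) (θv : V → ℝ) (θe : V × V → ℝ)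

lemma Z_pos : 0 < Z E θv θe :=
  Finset.sum_pos (fun _ _ => Real.exp_pos _) Finset.univ_nonempty

lemma p_pos (σ : V → Bool) : 0 < p E θv θe σ :=
  div_pos (Real.exp_pos _) (Z_pos E θv θe)

lemma sum_p : ∑ σ, p E θv θe σ = 1 := by
  simp only [p, ← Finset.sum_div]
  exact div_self (Z_pos E θv θe).ne'

lemma isDist_p : IsDist (p E θv θe) :=
  ⟨fun σ => (p_pos E θv θe σ).le, sum_p E θv θe⟩

lemma sum_mul_log_p {μ : (V → Bool) → ℝ} (hμ : ∑ σ, μ σ = 1) :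
    ∑ σ, μ σ * Real.log (p E θv θe σ)
      = ∑ σ, μ σ * weight E θv θe σ - Real.log (Z E θv θe) := by
  simp only [p, Real.log_div (Real.exp_ne_zero _) (Z_pos E θv θe).ne', Real.log_exp, mul_sub,
    Finset.sum_sub_distrib, ← Finset.sum_mul, hμ, one_mul]

-- Gibbs variational principle.
lemma H_add_sum_mul_weight_le {μ : (V → Bool) → ℝ} (hμ : IsDist μ) :
    H μ + ∑ σ, μ σ * weight E θv θe σ ≤ Real.log (Z E θv θe) := by
  have := sum_mul_log_le_sum_mul_log hμ.1 (p_pos E θv θe) (by rw [sum_p, hμ.2])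
  rw [sum_mul_log_p E θv θe hμ.2] at this
  rw [H]
  linarith

lemma H_p_add_sum_mul_weight :
    H (p E θv θe) + ∑ σ, p E θv θe σ * weight E θv θe σ = Real.log (Z E θv θe) := by
  rw [H, sum_mul_log_p E θv θe (sum_p E θv θe)]
  ring

end Gibbs

section Lagrangian

variable (E : Finset (V × V)) (U : V × V → ℝ → ℝ) (C : V → ℝ → ℝ) (β : ℝ)
  (θv : V → ℝ) (θe : V × V → ℝ)

lemma Lag_eq_H_add_sum_add_sum (μ : (V → Bool) → ℝ) (lv : V → ℝ) (le : V × V → ℝ) :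
    Lag E U C β θv θe μ lv le
      = 1 / β * (H μ + ∑ σ, μ σ * weight E θv θe σ)
        + ∑ e ∈ E, (U e (le e) - θe e / β * le e)
        + ∑ i, (-C i (lv i) - θv i / β * lv i) := by
  have hN : ∑ i, θv i / β * meanN μ i = 1 / β * ∑ σ, μ σ * ∑ i, θv i * ind (σ i) := by
    simp only [meanN, Finset.mul_sum]
    rw [Finset.sum_comm]
    exact Finset.sum_congr rfl fun _ _ => Finset.sum_congr rfl fun _ _ => by ring
  have hE : ∑ e ∈ E, θe e / β * meanE μ e
      = 1 / β * ∑ σ, μ σ * ∑ e ∈ E, θe e * ind (σ e.1) * ind (σ e.2) := by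
    simp only [meanE, Finset.mul_sum]
    rw [Finset.sum_comm]
    exact Finset.sum_congr rfl fun _ _ => Finset.sum_congr rfl fun _ _ => by ring
  simp only [Lag, weight, mul_sub, mul_add, Finset.sum_sub_distrib, Finset.sum_add_distrib,
    Finset.sum_neg_distrib, hN, hE]
  ring

lemma isGreatest_Lag (hβ : 0 ≤ β) (hU : ∀ e ∈ E, ContinuousOn (U e) (Icc 0 1))
    (hC : ∀ i, ContinuousOn (C i) (Icc 0 1)) :
    IsGreatest {y : ℝ | ∃ μ lv le, IsDist μ ∧ (∀ i, lv i ∈ Set.Icc (0:ℝ) 1) ∧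
        (∀ e, le e ∈ Set.Icc (0:ℝ) 1) ∧ y = Lag E U C β θv θe μ lv le}
      (1 / β * Real.log (Z E θv θe) + ∑ e ∈ E, tiltedMax (U e) (θe e / β)
        + ∑ i, tiltedMax (-C i) (θv i / β)) := by
  classical
  choose lv hlv hlvmax using fun i => exists_isMaxOn_tilted (hC i).neg (θv i / β)
  have hle : ∀ e, ∃ y ∈ Icc (0:ℝ) 1,
      e ∈ E → IsMaxOn (fun y => U e y - θe e / β * y) (Icc 0 1) y := fun e =>
    if he : e ∈ E then (exists_isMaxOn_tilted (hU e he) _).imp fun _ h => ⟨h.1, fun _ => h.2⟩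
    else ⟨0, left_mem_Icc.2 zero_le_one, fun h => absurd h he⟩
  choose le hle hlemax using hle
  refine ⟨⟨p E θv θe, lv, le, isDist_p E θv θe, hlv, hle, ?_⟩, ?_⟩
  · rw [Lag_eq_H_add_sum_add_sum, H_p_add_sum_mul_weight]
    congr 1
    · congr 1
      exact Finset.sum_congr rfl fun e he => tiltedMax_eq_of_isMaxOn (hle e) (hlemax e he)
    · exact Finset.sum_congr rfl fun i _ => tiltedMax_eq_of_isMaxOn (hlv i) (hlvmax i)
  · rintro y ⟨μ, lv', le', hμ, hlv', hle', rfl⟩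
    rw [Lag_eq_H_add_sum_add_sum]
    gcongr with e he i
    · exact H_add_sum_mul_weight_le E θv θe hμ
    · exact le_tiltedMax (hU e he) _ (hle' e)
    · exact le_tiltedMax (hC i).neg _ (hlv' i)

lemma P_eq_neg_log_Z_add_sum_tiltedMax (hβ : 0 ≤ β) (hU : ∀ e ∈ E, ContinuousOn (U e) (Icc 0 1))
    (hC : ∀ i, ContinuousOn (C i) (Icc 0 1)) :
    P E U C β θv θe = -(1 / β * Real.log (Z E θv θe) + ∑ e ∈ E, tiltedMax (U e) (θe e / β)
        + ∑ i, tiltedMax (-C i) (θv i / β)) := by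
  rw [P, (isGreatest_Lag E U C β θv θe hβ hU hC).csSup_eq]

end Lagrangian

lemma sum_exp_add_mul_eq {Ω : Type*} [Fintype Ω] {w q : Ω → ℝ} (hq : ∀ σ, q σ = 0 ∨ q σ = 1)
    (x : ℝ) : ∑ σ, Real.exp (w σ + x * q σ)
      = (∑ σ, q σ * Real.exp (w σ)) * Real.exp x + ∑ σ, (1 - q σ) * Real.exp (w σ) := by
  rw [Finset.sum_mul, ← Finset.sum_add_distrib]
  refine Finset.sum_congr rfl fun σ _ => ?_
  rcases hq σ with h | h <;> simp [h, Real.exp_add, mul_comm]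

lemma sum_exp_add_mul_mul_eq {Ω : Type*} [Fintype Ω] {w q : Ω → ℝ}
    (hq : ∀ σ, q σ = 0 ∨ q σ = 1) (x : ℝ) :
    ∑ σ, Real.exp (w σ + x * q σ) * q σ = (∑ σ, q σ * Real.exp (w σ)) * Real.exp x := by
  rw [Finset.sum_mul]
  refine Finset.sum_congr rfl fun σ _ => ?_
  rcases hq σ with h | h <;> simp [h, Real.exp_add, mul_comm]

lemma sum_mul_exp_pos {Ω : Type*} [Fintype Ω] {w q : Ω → ℝ} (hq : ∀ σ, 0 ≤ q σ)
    (h : ∃ σ, 0 < q σ) : 0 < ∑ σ, q σ * Real.exp (w σ) := by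
  obtain ⟨σ, hσ⟩ := h
  exact Finset.sum_pos' (fun τ _ => mul_nonneg (hq τ) (Real.exp_pos _).le)
    ⟨σ, Finset.mem_univ σ, mul_pos hσ (Real.exp_pos _)⟩

lemma _root_.Finset.sum_apply_update_of_mem {ι α M : Type*} [DecidableEq ι] [AddCommMonoid M]
    {s : Finset ι} {i : ι} (h : i ∈ s) (g : ι → α → M) (θ : ι → α) (x : α) :
    ∑ j ∈ s, g j (Function.update θ i x j) = g i x + ∑ j ∈ s \ {i}, g j (θ j) := by
  simp_rw [Function.apply_update g θ i x]
  exact Finset.sum_update_of_mem h _ _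

lemma weight_update_node (E : Finset (V × V)) (θv : V → ℝ) (θe : V × V → ℝ) (i : V) (x : ℝ)
    (σ : V → Bool) :
    weight E (Function.update θv i x) θe σ
      = weight E (Function.update θv i 0) θe σ + x * ind (σ i) := by
  simp only [weight, Finset.sum_apply_update_of_mem (Finset.mem_univ i) (fun j v => v * ind (σ j))]
  ring

lemma weight_update_edge (E : Finset (V × V)) (θv : V → ℝ) (θe : V × V → ℝ) {e : V × V}
    (he : e ∈ E) (x : ℝ) (σ : V → Bool) :
    weight E θv (Function.update θe e x) σ
      = weight E θv (Function.update θe e 0) σ + x * (ind (σ e.1) * ind (σ e.2)) := by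
  simp only [weight, Finset.sum_apply_update_of_mem he (fun e v => v * ind (σ e.1) * ind (σ e.2))]
  ring

lemma sign_deriv_eq_of_weight_eq_add_mul {E : Finset (V × V)} {θv : ℝ → V → ℝ} {θe : ℝ → V × V → ℝ}
    {w q : (V → Bool) → ℝ} (hq : ∀ σ, q σ = 0 ∨ q σ = 1) (hq₁ : ∃ σ, q σ = 1)
    (hq₀ : ∃ σ, q σ = 0) (hw : ∀ x σ, weight E (θv x) (θe x) σ = w σ + x * q σ)
    {β : ℝ} (hβ : 0 < β) {f f' : ℝ → ℝ} (hf' : ∀ y, HasDerivAt f (f' y) y)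
    (hconc : StrictConcaveOn ℝ (Icc 0 1) f) (K t : ℝ) :
    Real.sign (deriv (fun x => f (∑ σ, p E (θv x) (θe x) σ * q σ)
        - 1 / β * (x * ∑ σ, p E (θv x) (θe x) σ * q σ
          + Real.log (1 - ∑ σ, p E (θv x) (θe x) σ * q σ))) t)
      = Real.sign (deriv (fun x =>
          -(1 / β * Real.log (Z E (θv x) (θe x)) + tiltedMax f (x / β) + K)) t) := by
  set a := ∑ σ, q σ * Real.exp (w σ)
  set b := ∑ σ, (1 - q σ) * Real.exp (w σ)
  have hZ : ∀ x, Z E (θv x) (θe x) = a * Real.exp x + b := fun x => by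
    simp only [Z, hw]
    exact sum_exp_add_mul_eq hq x
  have hs : ∀ x, ∑ σ, p E (θv x) (θe x) σ * q σ = logistic a b x := fun x => by
    simp only [p, div_mul_eq_mul_div, ← Finset.sum_div, hZ, hw, sum_exp_add_mul_mul_eq hq x,
      logistic]
    rfl
  have ha : 0 < a := sum_mul_exp_pos (fun σ => by rcases hq σ with h | h <;> simp [h])
    (hq₁.imp fun σ h => by simp [h])
  have hb : 0 < b := sum_mul_exp_pos (fun σ => by rcases hq σ with h | h <;> simp [h])
    (hq₀.imp fun σ h => by simp [h])
  simp only [hZ, hs]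
  exact sign_deriv_payoff_eq_sign_deriv_potential ha hb hβ hf' hconc K t

section Players

variable {E : Finset (V × V)} {U : V × V → ℝ → ℝ} {C : V → ℝ → ℝ} {β : ℝ}

lemma sign_deriv_ΨN_eq_sign_deriv_P (hβ : 0 < β) (hU : ∀ e ∈ E, ContinuousOn (U e) (Icc 0 1))
    (hC : ∀ j, ContinuousOn (C j) (Icc 0 1)) {i : V} {C'ᵢ : ℝ → ℝ}
    (hCᵢ : StrictConvexOn ℝ (Icc 0 1) (C i)) (hC'ᵢ : ∀ x, HasDerivAt (C i) (C'ᵢ x) x)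
    (θv : V → ℝ) (θe : V × V → ℝ) :
    Real.sign (deriv (fun x => ΨN E C β (Function.update θv i x) θe i) (θv i)) =
      Real.sign (deriv (fun x => P E U C β (Function.update θv i x) θe) (θv i)) := by
  have hP : ∀ x, P E U C β (Function.update θv i x) θe
      = -(1 / β * Real.log (Z E (Function.update θv i x) θe) + tiltedMax (-C i) (x / β)
        + (∑ e ∈ E, tiltedMax (U e) (θe e / β)
          + ∑ j ∈ Finset.univ \ {i}, tiltedMax (-C j) (θv j / β))) := fun x => by
    rw [P_eq_neg_log_Z_add_sum_tiltedMax E U C β _ θe hβ.le hU hC,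
      Finset.sum_apply_update_of_mem (Finset.mem_univ i) (fun j v => tiltedMax (-C j) (v / β))]
    ring
  simp only [ΨN, Function.update_self, hP]
  exact sign_deriv_eq_of_weight_eq_add_mul (fun σ => ind_eq_zero_or_one (σ i)) ⟨fun _ => true, rfl⟩
    ⟨fun _ => false, rfl⟩ (weight_update_node E θv θe i) hβ (fun y => (hC'ᵢ y).neg) hCᵢ.neg _ _

lemma sign_deriv_ΨE_eq_sign_deriv_P (hβ : 0 < β) (hU : ∀ e ∈ E, ContinuousOn (U e) (Icc 0 1))
    (hC : ∀ j, ContinuousOn (C j) (Icc 0 1)) {e : V × V} (he : e ∈ E) {U'ₑ : ℝ → ℝ}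
    (hUₑ : StrictConcaveOn ℝ (Icc 0 1) (U e)) (hU'ₑ : ∀ x, HasDerivAt (U e) (U'ₑ x) x)
    (θv : V → ℝ) (θe : V × V → ℝ) :
    Real.sign (deriv (fun x => ΨE E U β θv (Function.update θe e x) e) (θe e)) =
      Real.sign (deriv (fun x => P E U C β θv (Function.update θe e x)) (θe e)) := by
  have hP : ∀ x, P E U C β θv (Function.update θe e x)
      = -(1 / β * Real.log (Z E θv (Function.update θe e x)) + tiltedMax (U e) (x / β)
        + (∑ e' ∈ E \ {e}, tiltedMax (U e') (θe e' / β)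
          + ∑ i, tiltedMax (-C i) (θv i / β))) := fun x => by
    rw [P_eq_neg_log_Z_add_sum_tiltedMax E U C β θv _ hβ.le hU hC,
      Finset.sum_apply_update_of_mem he (fun e' v => tiltedMax (U e') (v / β))]
    ring
  simp only [ΨE, Function.update_self, hP]
  exact sign_deriv_eq_of_weight_eq_add_mul (fun σ => ind_mul_ind_eq_zero_or_one (σ e.1) (σ e.2))
    ⟨fun _ => true, by simp [ind]⟩ ⟨fun _ => false, by simp [ind]⟩
    (weight_update_edge E θv θe he) hβ hU'ₑ hUₑ _ _

end Players

theorem ordinal_potential_game_general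
    (E : Finset (V × V)) (U : V × V → ℝ → ℝ) (C : V → ℝ → ℝ)
    (U' : V × V → ℝ → ℝ) (C' : V → ℝ → ℝ) (β : ℝ) (hβ : 0 < β)
    (hU : ∀ e ∈ E, StrictConcaveOn ℝ (Set.Icc (0:ℝ) 1) (U e))
    (hC : ∀ i, StrictConvexOn ℝ (Set.Icc (0:ℝ) 1) (C i))
    (hU' : ∀ e ∈ E, ∀ x : ℝ, HasDerivAt (U e) (U' e x) x)
    (hC' : ∀ i, ∀ x : ℝ, HasDerivAt (C i) (C' i x) x)
    (θv : V → ℝ) (θe : V × V → ℝ) :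
    (∀ i : V,
      Real.sign (deriv (fun x => ΨN E C β (Function.update θv i x) θe i) (θv i)) =
      Real.sign (deriv (fun x => P E U C β (Function.update θv i x) θe) (θv i))) ∧
    (∀ e ∈ E,
      Real.sign (deriv (fun x => ΨE E U β θv (Function.update θe e x) e) (θe e)) =
      Real.sign (deriv (fun x => P E U C β θv (Function.update θe e x)) (θe e))) := by
  have hUc : ∀ e ∈ E, ContinuousOn (U e) (Icc 0 1) := fun e he =>
    (continuous_iff_continuousAt.2 fun x => (hU' e he x).continuousAt).continuousOn
  have hCc : ∀ i, ContinuousOn (C i) (Icc 0 1) := fun i =>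
    (continuous_iff_continuousAt.2 fun x => (hC' i x).continuousAt).continuousOn
  exact ⟨fun i => sign_deriv_ΨN_eq_sign_deriv_P hβ hUc hCc (hC i) (hC' i) θv θe,
    fun e he => sign_deriv_ΨE_eq_sign_deriv_P hβ hUc hCc he (hU e he) (hU' e he) θv θe⟩

theorem ordinal_potential_game
    (E : Finset (V × V)) (U : V × V → ℝ → ℝ) (C : V → ℝ → ℝ)
    (U' : V × V → ℝ → ℝ) (C' : V → ℝ → ℝ) (β : ℝ) (hβ : 0 < β)
    (hU : ∀ e ∈ E, StrictConcaveOn ℝ (Set.Icc (0:ℝ) 1) (U e))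
    (hC : ∀ i, StrictConvexOn ℝ (Set.Icc (0:ℝ) 1) (C i))
    (hU' : ∀ e ∈ E, ∀ x : ℝ, HasDerivAt (U e) (U' e x) x)
    (hC' : ∀ i, ∀ x : ℝ, HasDerivAt (C i) (C' i x) x)
    (θv : V → ℝ) (θe : V × V → ℝ)
    -- region of non-trivial marginals
    (hsN : ∀ i, sN E θv θe i ∈ Set.Ioo (0:ℝ) 1)
    (hsE : ∀ e ∈ E, sE E θv θe e ∈ Set.Ioo (0:ℝ) 1) :
    (∀ i : V,
      Real.sign (deriv (fun x => ΨN E C β (Function.update θv i x) θe i) (θv i)) =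
      Real.sign (deriv (fun x => P E U C β (Function.update θv i x) θe) (θv i))) ∧
    (∀ e ∈ E,
      Real.sign (deriv (fun x => ΨE E U β θv (Function.update θe e x) e) (θe e)) =
      Real.sign (deriv (fun x => P E U C β θv (Function.update θe e x)) (θe e))) :=
  ordinal_potential_game_general E U C U' C' β hβ hU hC hU' hC' θv θe

end Stmt13
end

section
/- Suppose $\theta^{NE}$ is a strategy profile at which the marginals satisfy $\theta^{NE}_i = -\beta C_i'(s_i(\theta^{NE}))$ for all $i \in V$ and $\theta^{NE}_{ij} = \beta U_{ij}'(s_{ij}(\theta^{NE}))$ for all $(i,j)\in E$, and let $\lambda^\star$ maximize $F(\lambda)=\sum U_{ij}(\lambda_{ij})-\sum C_i(\lambda_i)$ over the coordination region $\Lambda$. Then the Price of Anarchy satisfies $F(\lambda^\star) - F(s(\theta^{NE})) \leq \frac{\log|\mathcal{I}(G)|}{\beta} = \frac{|V|\log 2}{\beta}$; in particular the gain at $\theta^{NE}$ converges to the social optimum as $\beta \to \infty$. -/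
/-!
The fixed-point conditions say that `θ` is `β` times the gradient of `F` at the marginals
`s = s(θ)` of the Gibbs distribution `p = p_θ`. Concavity of `F` (tangent-line inequalities for
`U_{ij}` and `C_i`) therefore gives, for any distribution `μ` with marginals `λ`,
`β (F(λ) - F(s)) ≤ ⟨θ, λ - s⟩ = 𝔼_μ[w_θ] - 𝔼_p[w_θ]`, where `w_θ` is the weight of the Gibbs
measure. By the Gibbs variational principle `𝔼_μ[w_θ] + H(μ) ≤ log Z = 𝔼_p[w_θ] + H(p)`, so the
right-hand side is at most `H(p) - H(μ) ≤ log |𝓘(G)|`.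
-/

open Finset

namespace Stmt18

variable {V : Type*} [Fintype V] [DecidableEq V]

noncomputable def ind (b : Bool) : ℝ := if b then 1 else 0

noncomputable def weight (E : Finset (V × V)) (θv : V → ℝ) (θe : V × V → ℝ)
    (σ : V → Bool) : ℝ :=
  ∑ i, θv i * ind (σ i) + ∑ e ∈ E, θe e * ind (σ e.1) * ind (σ e.2)

noncomputable def Z (E : Finset (V × V)) (θv : V → ℝ) (θe : V × V → ℝ) : ℝ :=
  ∑ σ : V → Bool, Real.exp (weight E θv θe σ)

noncomputable def p (E : Finset (V × V)) (θv : V → ℝ) (θe : V × V → ℝ)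
    (σ : V → Bool) : ℝ :=
  Real.exp (weight E θv θe σ) / Z E θv θe

noncomputable def sN (E : Finset (V × V)) (θv : V → ℝ) (θe : V × V → ℝ) (i : V) : ℝ :=
  ∑ σ : V → Bool, p E θv θe σ * ind (σ i)

noncomputable def sE (E : Finset (V × V)) (θv : V → ℝ) (θe : V × V → ℝ) (e : V × V) : ℝ :=
  ∑ σ : V → Bool, p E θv θe σ * (ind (σ e.1) * ind (σ e.2))

def IsDist (μ : (V → Bool) → ℝ) : Prop :=
  (∀ σ, 0 ≤ μ σ) ∧ ∑ σ : V → Bool, μ σ = 1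

noncomputable def meanN (μ : (V → Bool) → ℝ) (i : V) : ℝ :=
  ∑ σ : V → Bool, μ σ * ind (σ i)

noncomputable def meanE (μ : (V → Bool) → ℝ) (e : V × V) : ℝ :=
  ∑ σ : V → Bool, μ σ * (ind (σ e.1) * ind (σ e.2))

noncomputable def Fobj (E : Finset (V × V)) (U : V × V → ℝ → ℝ) (C : V → ℝ → ℝ)
    (lv : V → ℝ) (le : V × V → ℝ) : ℝ :=
  ∑ e ∈ E, U e (le e) - ∑ i, C i (lv i)

open Real

theorem _root_.ConvexOn.add_mul_sub_le_of_hasDerivAt {S : Set ℝ} {f : ℝ → ℝ} {f' x y : ℝ}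
    (hf : ConvexOn ℝ S f) (hx : x ∈ S) (hy : y ∈ S) (hd : HasDerivAt f f' x) :
    f x + f' * (y - x) ≤ f y := by
  rcases lt_trichotomy x y with hxy | rfl | hyx
  · have h := hf.le_slope_of_hasDerivAt hx hy hxy hd
    rw [slope_def_field, le_div_iff₀ (sub_pos.2 hxy)] at h
    linarith
  · simp
  · have h := hf.slope_le_of_hasDerivAt hy hx hyx hd
    rw [slope_def_field, div_le_iff₀ (sub_pos.2 hyx)] at h
    linarith

theorem _root_.ConcaveOn.le_add_mul_sub_of_hasDerivAt {S : Set ℝ} {f : ℝ → ℝ} {f' x y : ℝ}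
    (hf : ConcaveOn ℝ S f) (hx : x ∈ S) (hy : y ∈ S) (hd : HasDerivAt f f' x) :
    f y ≤ f x + f' * (y - x) := by
  have := hf.neg.add_mul_sub_le_of_hasDerivAt hx hy hd.neg
  simp only [Pi.neg_apply] at this
  linarith

theorem _root_.Real.mul_add_negMulLog_le_exp_sub {x : ℝ} (hx : 0 ≤ x) (t : ℝ) :
    x * t + negMulLog x ≤ exp t - x := by
  rcases hx.eq_or_lt with rfl | hx
  · simpa using (exp_pos t).le
  · have h := mul_le_mul_of_nonneg_left (log_le_sub_one_of_pos (div_pos (exp_pos t) hx)) hx.le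
    rw [log_div (exp_ne_zero t) hx.ne', log_exp, mul_sub, mul_sub, mul_one,
      mul_div_cancel₀ _ hx.ne'] at h
    rw [negMulLog]
    linarith

theorem _root_.Real.sum_mul_add_sum_negMulLog_le_log_sum_exp {ι : Type*} [Fintype ι] {μ : ι → ℝ}
    (hμ0 : ∀ i, 0 ≤ μ i) (hμ1 : ∑ i, μ i = 1) (w : ι → ℝ) :
    ∑ i, μ i * w i + ∑ i, negMulLog (μ i) ≤ log (∑ i, exp (w i)) := by
  have hZ : 0 < ∑ i, exp (w i) :=
    sum_pos (fun i _ => exp_pos (w i)) (nonempty_of_sum_ne_zero (hμ1.trans_ne one_ne_zero))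
  have h := sum_le_sum fun i (_ : i ∈ univ) =>
    mul_add_negMulLog_le_exp_sub (hμ0 i) (w i - log (∑ j, exp (w j)))
  simp only [exp_sub, exp_log hZ, mul_sub, sum_add_distrib, sum_sub_distrib, ← sum_div,
    ← sum_mul, hμ1, div_self hZ.ne'] at h
  linarith

theorem _root_.Real.sum_mul_add_sum_negMulLog_eq_log_sum_exp {ι : Type*} [Fintype ι] [Nonempty ι]
    {μ w : ι → ℝ} (hμ : ∀ i, μ i = exp (w i) / ∑ j, exp (w j)) :
    ∑ i, μ i * w i + ∑ i, negMulLog (μ i) = log (∑ i, exp (w i)) := by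
  have hZ : 0 < ∑ i, exp (w i) := sum_pos (fun i _ => exp_pos (w i)) univ_nonempty
  calc ∑ i, μ i * w i + ∑ i, negMulLog (μ i) = ∑ i, μ i * log (∑ j, exp (w j)) := by
        rw [← sum_add_distrib]
        refine sum_congr rfl fun i _ => ?_
        rw [hμ, negMulLog, log_div (exp_ne_zero _) hZ.ne', log_exp]
        ring
    _ = log (∑ i, exp (w i)) := by
        rw [← sum_mul, sum_congr rfl fun i _ => hμ i, ← sum_div, div_self hZ.ne', one_mul]

theorem _root_.Real.sum_negMulLog_le_log_card {ι : Type*} [Fintype ι] {μ : ι → ℝ}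
    (hμ0 : ∀ i, 0 ≤ μ i) (hμ1 : ∑ i, μ i = 1) :
    ∑ i, negMulLog (μ i) ≤ log (Fintype.card ι) := by
  simpa using sum_mul_add_sum_negMulLog_le_log_sum_exp hμ0 hμ1 0

theorem _root_.Real.sum_negMulLog_nonneg {ι : Type*} [Fintype ι] {μ : ι → ℝ}
    (hμ0 : ∀ i, 0 ≤ μ i) (hμ1 : ∑ i, μ i = 1) :
    0 ≤ ∑ i, negMulLog (μ i) :=
  sum_nonneg fun i _ => negMulLog_nonneg (hμ0 i)
    (hμ1 ▸ single_le_sum (fun j _ => hμ0 j) (mem_univ i))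

theorem _root_.sum_mul_mem_Icc_of_sum_eq_one {ι : Type*} [Fintype ι] {μ g : ι → ℝ}
    (hμ0 : ∀ i, 0 ≤ μ i) (hμ1 : ∑ i, μ i = 1) (hg : ∀ i, g i ∈ Set.Icc (0 : ℝ) 1) :
    ∑ i, μ i * g i ∈ Set.Icc (0 : ℝ) 1 :=
  ⟨sum_nonneg fun i _ => mul_nonneg (hμ0 i) (hg i).1,
    hμ1 ▸ sum_le_sum fun i _ => mul_le_of_le_one_right (hμ0 i) (hg i).2⟩

theorem ind_mem_Icc (b : Bool) : ind b ∈ Set.Icc (0 : ℝ) 1 := by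
  cases b <;> simp [ind]

theorem meanN_mem_Icc {μ : (V → Bool) → ℝ} (hμ : IsDist μ) (i : V) :
    meanN μ i ∈ Set.Icc (0 : ℝ) 1 :=
  sum_mul_mem_Icc_of_sum_eq_one hμ.1 hμ.2 fun σ => ind_mem_Icc (σ i)

theorem meanE_mem_Icc {μ : (V → Bool) → ℝ} (hμ : IsDist μ) (e : V × V) :
    meanE μ e ∈ Set.Icc (0 : ℝ) 1 :=
  sum_mul_mem_Icc_of_sum_eq_one hμ.1 hμ.2 fun σ => unitInterval.mul_mem (ind_mem_Icc (σ e.1)) (ind_mem_Icc (σ e.2))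

variable (E : Finset (V × V)) (θv : V → ℝ) (θe : V × V → ℝ)

theorem sN_eq_meanN : sN E θv θe = meanN (p E θv θe) := rfl

theorem sE_eq_meanE : sE E θv θe = meanE (p E θv θe) := rfl

theorem isDist_p : IsDist (p E θv θe) := by
  have hZ : 0 < Z E θv θe := sum_pos (fun σ _ => exp_pos _) univ_nonempty
  refine ⟨fun σ => div_nonneg (exp_pos _).le hZ.le, ?_⟩
  simp only [p, ← sum_div]
  exact div_self hZ.ne'

theorem sum_mul_weight (μ : (V → Bool) → ℝ) :
    ∑ σ, μ σ * weight E θv θe σ = ∑ i, θv i * meanN μ i + ∑ e ∈ E, θe e * meanE μ e := by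
  simp only [weight, meanN, meanE, mul_add, sum_add_distrib, mul_sum]
  congr 1 <;> rw [sum_comm] <;> exact sum_congr rfl fun _ _ => sum_congr rfl fun _ _ => by ring

omit [DecidableEq V] in
theorem mul_Fobj_sub_le_of_fixedPoint {U U' : V × V → ℝ → ℝ} {C C' : V → ℝ → ℝ} {β : ℝ}
    (hβ : 0 ≤ β) (hU : ∀ e ∈ E, ConcaveOn ℝ (Set.Icc (0 : ℝ) 1) (U e))
    (hC : ∀ i, ConvexOn ℝ (Set.Icc (0 : ℝ) 1) (C i)) {lv sv : V → ℝ} {le se : V × V → ℝ}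
    (hU' : ∀ e ∈ E, HasDerivAt (U e) (U' e (se e)) (se e))
    (hC' : ∀ i, HasDerivAt (C i) (C' i (sv i)) (sv i))
    (hθv : ∀ i, θv i = -β * C' i (sv i)) (hθe : ∀ e ∈ E, θe e = β * U' e (se e))
    (hlv : ∀ i, lv i ∈ Set.Icc (0 : ℝ) 1) (hsv : ∀ i, sv i ∈ Set.Icc (0 : ℝ) 1)
    (hle : ∀ e, le e ∈ Set.Icc (0 : ℝ) 1) (hse : ∀ e, se e ∈ Set.Icc (0 : ℝ) 1) :
    β * (Fobj E U C lv le - Fobj E U C sv se) ≤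
      (∑ i, θv i * lv i + ∑ e ∈ E, θe e * le e) - (∑ i, θv i * sv i + ∑ e ∈ E, θe e * se e) := by
  have hUe : ∀ e ∈ E, β * U e (le e) ≤ β * U e (se e) + θe e * (le e - se e) := fun e he => by
    have h := mul_le_mul_of_nonneg_left
      ((hU e he).le_add_mul_sub_of_hasDerivAt (hse e) (hle e) (hU' e he)) hβ
    rw [hθe e he]
    linarith
  have hCi : ∀ i, β * C i (sv i) ≤ β * C i (lv i) + θv i * (lv i - sv i) := fun i => by
    have h := mul_le_mul_of_nonneg_left
      ((hC i).add_mul_sub_le_of_hasDerivAt (hsv i) (hlv i) (hC' i)) hβ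
    rw [hθv i]
    linarith
  have hUsum := sum_le_sum hUe
  have hCsum := sum_le_sum fun i (_ : i ∈ univ) => hCi i
  simp only [mul_sub, sum_add_distrib, sum_sub_distrib, ← mul_sum] at hUsum hCsum
  rw [Fobj, Fobj]
  linarith

theorem price_of_anarchy_bound_general
    (E : Finset (V × V)) (U U' : V × V → ℝ → ℝ) (C C' : V → ℝ → ℝ)
    (β : ℝ) (hβ : 0 < β)
    (hU : ∀ e ∈ E, StrictConcaveOn ℝ (Set.Icc (0:ℝ) 1) (U e))
    (hC : ∀ i, StrictConvexOn ℝ (Set.Icc (0:ℝ) 1) (C i))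
    (hU' : ∀ e ∈ E, ∀ x : ℝ, HasDerivAt (U e) (U' e x) x)
    (hC' : ∀ i, ∀ x : ℝ, HasDerivAt (C i) (C' i x) x)
    -- the fixed-point (Nash equilibrium) conditions
    (θv : V → ℝ) (θe : V × V → ℝ)
    (hfixN : ∀ i, θv i = -β * C' i (sN E θv θe i))
    (hfixE : ∀ e ∈ E, θe e = β * U' e (sE E θv θe e))
    (μs : (V → Bool) → ℝ) (hμs : IsDist μs) :
    Fobj E U C (meanN μs) (meanE μs) -
      Fobj E U C (fun i => sN E θv θe i) (fun e => sE E θv θe e) ≤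
        Real.log (Fintype.card (V → Bool)) / β ∧
    Real.log (Fintype.card (V → Bool)) = (Fintype.card V : ℝ) * Real.log 2 := by
  refine ⟨?_, by rw [Fintype.card_fun, Fintype.card_bool, Nat.cast_pow, Nat.cast_ofNat, log_pow]⟩
  have hp := isDist_p E θv θe
  have htangent := mul_Fobj_sub_le_of_fixedPoint E θv θe hβ.le (fun e he => (hU e he).concaveOn)
    (fun i => (hC i).convexOn) (fun e he => hU' e he _) (fun i => hC' i _) hfixN hfixE
    (meanN_mem_Icc hμs) (meanN_mem_Icc hp) (meanE_mem_Icc hμs) (meanE_mem_Icc hp)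
  have hgibbs := sum_mul_add_sum_negMulLog_le_log_sum_exp hμs.1 hμs.2 (weight E θv θe)
  have hgibbs_p := sum_mul_add_sum_negMulLog_eq_log_sum_exp (μ := p E θv θe) fun _ => rfl
  rw [sum_mul_weight] at hgibbs hgibbs_p
  have hH_nonneg := sum_negMulLog_nonneg hμs.1 hμs.2
  have hH_le := sum_negMulLog_le_log_card hp.1 hp.2
  rw [← sN_eq_meanN, ← sE_eq_meanE] at hgibbs_p
  rw [le_div_iff₀ hβ, mul_comm]
  linarith

theorem price_of_anarchy_bound
    (E : Finset (V × V)) (U U' : V × V → ℝ → ℝ) (C C' : V → ℝ → ℝ)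
    (β : ℝ) (hβ : 0 < β)
    (hU : ∀ e ∈ E, StrictConcaveOn ℝ (Set.Icc (0:ℝ) 1) (U e))
    (hC : ∀ i, StrictConvexOn ℝ (Set.Icc (0:ℝ) 1) (C i))
    (hU' : ∀ e ∈ E, ∀ x : ℝ, HasDerivAt (U e) (U' e x) x)
    (hC' : ∀ i, ∀ x : ℝ, HasDerivAt (C i) (C' i x) x)
    -- the fixed-point (Nash equilibrium) conditions
    (θv : V → ℝ) (θe : V × V → ℝ)
    (hfixN : ∀ i, θv i = -β * C' i (sN E θv θe i))
    (hfixE : ∀ e ∈ E, θe e = β * U' e (sE E θv θe e))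
    -- `λ⋆ = E_{μ⋆}[φ]` maximizes `F` over the coordination region `Λ`
    (μs : (V → Bool) → ℝ) (hμs : IsDist μs)
    (hstar : ∀ μ, IsDist μ →
      Fobj E U C (meanN μ) (meanE μ) ≤ Fobj E U C (meanN μs) (meanE μs)) :
    Fobj E U C (meanN μs) (meanE μs) -
      Fobj E U C (fun i => sN E θv θe i) (fun e => sE E θv θe e) ≤
        Real.log (Fintype.card (V → Bool)) / β ∧
    Real.log (Fintype.card (V → Bool)) = (Fintype.card V : ℝ) * Real.log 2 :=
  price_of_anarchy_bound_general E U U' C C' β hβ hU hC hU' hC' θv θe hfixN hfixE μs hμs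

end Stmt18
end
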